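/- arXiv:1104.4917 — 7 statements merged into one kernel-verified Lean document; each statement's English description precedes it below -/
import Mathlib

section
/- If A is a Hilbert–Schmidt operator on a complex separable Hilbert space, then (1+A)e^{-A} − 1 is a trace-class operator. -/
open scoped InnerProductSpace ComplexConjugate

noncomputable section

/-- The absolute value `|A| = √(A*A)` of a bounded operator on a complex Hilbert space. -/
noncomputable def absCLM {H : Type} [NormedAddCommGroup H] [InnerProductSpace ℂ H]
    [CompleteSpace H] (A : H →L[ℂ] H) : H →L[ℂ] H :=
  CFC.sqrt (ContinuousLinearMap.adjoint A * A)

/-- The trace of an operator computed along a Hilbert basis. -/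
noncomputable def traceAlong {H : Type} [NormedAddCommGroup H] [InnerProductSpace ℂ H]
    [CompleteSpace H] {ι : Type} (b : HilbertBasis ι ℂ H) (A : H →L[ℂ] H) : ℂ :=
  ∑' i, ⟪b i, A (b i)⟫_ℂ

/-- `A` is trace class: `Tr |A| < ∞` along the Hilbert basis `b`. -/
def IsTraceClassAlong {H : Type} [NormedAddCommGroup H] [InnerProductSpace ℂ H]
    [CompleteSpace H] {ι : Type} (b : HilbertBasis ι ℂ H) (A : H →L[ℂ] H) : Prop :=
  Summable fun i => (⟪b i, absCLM A (b i)⟫_ℂ).re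

/-- The trace norm `‖A‖₁ = Tr |A|` along the Hilbert basis `b`. -/
noncomputable def traceNormAlong {H : Type} [NormedAddCommGroup H] [InnerProductSpace ℂ H]
    [CompleteSpace H] {ι : Type} (b : HilbertBasis ι ℂ H) (A : H →L[ℂ] H) : ℝ :=
  ∑' i, (⟪b i, absCLM A (b i)⟫_ℂ).re

/-- `A` is a Hilbert–Schmidt operator (along the Hilbert basis `b`). -/
def IsHSAlong {H : Type} [NormedAddCommGroup H] [InnerProductSpace ℂ H]
    [CompleteSpace H] {ι : Type} (b : HilbertBasis ι ℂ H) (A : H →L[ℂ] H) : Prop :=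
  Summable fun i => ‖A (b i)‖ ^ 2

/-- The Hilbert–Schmidt norm `‖A‖₂` along the Hilbert basis `b`. -/
noncomputable def hsNormAlong {H : Type} [NormedAddCommGroup H] [InnerProductSpace ℂ H]
    [CompleteSpace H] {ι : Type} (b : HilbertBasis ι ℂ H) (A : H →L[ℂ] H) : ℝ :=
  Real.sqrt (∑' i, ‖A (b i)‖ ^ 2)

/-- `Cₙ(A) = (1/n!) Σ_{ξ∈Sₙ} sign ξ · Π_{η ∈ Cycle(ξ)} tr(A^{|η|})`, where `trA` is used
for the trace of `A` itself (cycles of length one) and traces of higher powers are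
computed along the Hilbert basis `b`. -/
noncomputable def cycleSum {H : Type} [NormedAddCommGroup H] [InnerProductSpace ℂ H]
    [CompleteSpace H] {ι : Type} (b : HilbertBasis ι ℂ H) (trA : ℂ) (A : H →L[ℂ] H)
    (n : ℕ) : ℂ :=
  ((Nat.factorial n : ℂ))⁻¹ * ∑ ξ : Equiv.Perm (Fin n),
    ((Equiv.Perm.sign ξ : ℤ) : ℂ) * trA ^ (n - ξ.support.card) *
      ∏ η ∈ ξ.cycleFactorsFinset, traceAlong b (A ^ η.support.card)

/-- The extended Fredholm determinant `Det(1+A)` for `A ∈ L_{1|2}(H)`, with respect to the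
splitting given by the projections `P₁, P₂`: `Det(1+A) = 1 + Σ_{n≥1} Cₙ(A)`, where in `Cₙ(A)`
the trace of `A` is taken to be `Tr(A_even)`. -/
noncomputable def fredholmDetExt {H : Type} [NormedAddCommGroup H] [InnerProductSpace ℂ H]
    [CompleteSpace H] {ι : Type} (b : HilbertBasis ι ℂ H) (P₁ P₂ : H →L[ℂ] H)
    (A : H →L[ℂ] H) : ℂ :=
  1 + ∑' n : ℕ, cycleSum b (traceAlong b (P₁ * A * P₁ + P₂ * A * P₂)) A (n + 1)

/-- The classical Fredholm determinant `Det(1+A)` of a trace class operator `A`. -/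
noncomputable def fredholmDetCl {H : Type} [NormedAddCommGroup H] [InnerProductSpace ℂ H]
    [CompleteSpace H] {ι : Type} (b : HilbertBasis ι ℂ H) (A : H →L[ℂ] H) : ℂ :=
  1 + ∑' n : ℕ, cycleSum b (traceAlong b A) A (n + 1)

end

/-!
Since `e^{-A} = 1 - A + R A²` with `R = ∑ₖ (-A)ᵏ/(k+2)!`, one has `(1+A)e^{-A} - 1 = C A A` for a
bounded operator `C`, so the operator is the product of the two Hilbert–Schmidt operators `C A`
and `A`. A product `T S` of Hilbert–Schmidt operators is trace class: if `T S = U |T S|` is the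
polar decomposition, then `⟪eᵢ, |T S| eᵢ⟫ = ⟪T* U eᵢ, S eᵢ⟫`, and Cauchy–Schwarz bounds the sum by
`‖T* U‖₂ ‖S‖₂ ≤ ‖T‖₂ ‖S‖₂`. Instead of `U` we use the contractions
`W = T S ((T S)* T S + ε²)^{-1/2}`, which satisfy `‖|T S| - W* T S‖ ≤ ε`.
-/

namespace NormedSpace

open scoped Nat

variable {𝔸 : Type*} [NormedRing 𝔸] [CompleteSpace 𝔸]

theorem exists_exp_eq_one_add_add_mul_mul (𝕂 : Type*) [RCLike 𝕂] [NormedAlgebra 𝕂 𝔸] (a : 𝔸) :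
    ∃ r : 𝔸, exp a = 1 + a + r * a * a := by
  have hr : Summable fun k : ℕ => ((k + 2)! : 𝕂)⁻¹ • a ^ k := by
    refine .of_norm_bounded (norm_expSeries_summable' (𝕂 := 𝕂) a) fun k => ?_
    rw [norm_smul, norm_smul]
    simp only [norm_inv, RCLike.norm_natCast]
    gcongr
    omega
  refine ⟨∑' k, ((k + 2)! : 𝕂)⁻¹ • a ^ k, ?_⟩
  have htail := (hasSum_nat_add_iff' 2).mpr (exp_series_hasSum_exp' (𝕂 := 𝕂) a)
  have hsplit : exp a = ∑ i ∈ Finset.range 2, ((i ! : 𝕂)⁻¹ • a ^ i)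
      + (∑' k, ((k + 2)! : 𝕂)⁻¹ • a ^ k) * a * a := by
    refine eq_add_of_sub_eq' (htail.unique ?_)
    have hterm (k : ℕ) : ((k + 2)! : 𝕂)⁻¹ • a ^ (k + 2) = ((k + 2)! : 𝕂)⁻¹ • a ^ k * a * a := by
      rw [smul_mul_assoc, smul_mul_assoc, ← pow_succ, ← pow_succ]
    simpa only [hterm] using (hr.hasSum.mul_right a).mul_right a
  simpa [Finset.sum_range_succ] using hsplit

theorem exists_one_add_mul_exp_neg_sub_one_eq_mul_mul (𝕂 : Type*) [RCLike 𝕂] [NormedAlgebra 𝕂 𝔸]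
    (a : 𝔸) :
    ∃ c : 𝔸, (1 + a) * exp (-a) - 1 = c * a * a := by
  obtain ⟨r, hr⟩ := exists_exp_eq_one_add_add_mul_mul 𝕂 (-a)
  exact ⟨r - 1 + a * r, by rw [hr]; noncomm_ring⟩

end NormedSpace

theorem Real.summable_iff_tsum_ofReal_ne_top {ι : Type*} {f : ι → ℝ} (hf : ∀ i, 0 ≤ f i) :
    Summable f ↔ ∑' i, ENNReal.ofReal (f i) ≠ ⊤ := by
  refine ⟨Summable.tsum_ofReal_ne_top, fun h => ?_⟩
  simpa only [ENNReal.toReal_ofReal (hf _)] using ENNReal.summable_toReal h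

theorem Real.tsum_eq_toReal_tsum_ofReal {ι : Type*} {f : ι → ℝ} (hf : ∀ i, 0 ≤ f i) :
    ∑' i, f i = (∑' i, ENNReal.ofReal (f i)).toReal := by
  by_cases hs : Summable f
  · rw [← ENNReal.ofReal_tsum_of_nonneg hf hs, ENNReal.toReal_ofReal (tsum_nonneg hf)]
  · rw [tsum_eq_zero_of_not_summable hs,
      not_ne_iff.mp ((Real.summable_iff_tsum_ofReal_ne_top hf).not.mp hs), ENNReal.toReal_top]

theorem HilbertBasis.hasSum_norm_inner_sq {ι 𝕜 E : Type*} [RCLike 𝕜] [NormedAddCommGroup E]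
    [InnerProductSpace 𝕜 E] (b : HilbertBasis ι 𝕜 E) (x : E) :
    HasSum (fun i => ‖⟪b i, x⟫_𝕜‖ ^ 2) (‖x‖ ^ 2) := by
  have h := lp.hasSum_norm (p := 2) (by norm_num) (b.repr x)
  simp only [b.repr_apply_apply, LinearIsometryEquiv.norm_map] at h
  exact_mod_cast h

theorem ContinuousLinearMap.norm_mul_apply_sq_le {𝕜 E : Type*} [NontriviallyNormedField 𝕜]
    [SeminormedAddCommGroup E] [NormedSpace 𝕜 E] (C A : E →L[𝕜] E) (x : E) :
    ‖(C * A) x‖ ^ 2 ≤ ‖C‖ ^ 2 * ‖A x‖ ^ 2 := by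
  rw [← mul_pow]
  exact pow_le_pow_left₀ (norm_nonneg _) (C.le_opNorm (A x)) 2

section HilbertSchmidt

open ContinuousLinearMap

variable {H : Type} [NormedAddCommGroup H] [InnerProductSpace ℂ H] [CompleteSpace H]
  {ι : Type} (b : HilbertBasis ι ℂ H)

theorem tsum_ofReal_norm_adjoint_apply_sq (A : H →L[ℂ] H) :
    ∑' i, ENNReal.ofReal (‖adjoint A (b i)‖ ^ 2) = ∑' i, ENNReal.ofReal (‖A (b i)‖ ^ 2) := by
  have parseval (x : H) : ∑' j, ENNReal.ofReal (‖⟪b j, x⟫_ℂ‖ ^ 2) = ENNReal.ofReal (‖x‖ ^ 2) := by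
    rw [← (b.hasSum_norm_inner_sq x).tsum_eq,
      ENNReal.ofReal_tsum_of_nonneg (fun _ => sq_nonneg _) (b.hasSum_norm_inner_sq x).summable]
  simp only [← parseval, adjoint_inner_right, norm_inner_symm (b _) (A _)]
  exact ENNReal.tsum_comm

theorem hsNormAlong_adjoint (A : H →L[ℂ] H) : hsNormAlong b (adjoint A) = hsNormAlong b A := by
  simp only [hsNormAlong, Real.tsum_eq_toReal_tsum_ofReal (fun _ => sq_nonneg _),
    tsum_ofReal_norm_adjoint_apply_sq]

variable {b}

theorem IsHSAlong.adjoint {A : H →L[ℂ] H} (hA : IsHSAlong b A) : IsHSAlong b (adjoint A) := by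
  simpa only [IsHSAlong, Real.summable_iff_tsum_ofReal_ne_top (fun _ => sq_nonneg _),
    tsum_ofReal_norm_adjoint_apply_sq] using hA

theorem IsHSAlong.mul_left {A : H →L[ℂ] H} (hA : IsHSAlong b A) (C : H →L[ℂ] H) :
    IsHSAlong b (C * A) :=
  .of_nonneg_of_le (fun _ => sq_nonneg _) (fun i => norm_mul_apply_sq_le C A (b i))
    (Summable.mul_left _ hA)

theorem IsHSAlong.hsNormAlong_mul_left_le {A : H →L[ℂ] H} (hA : IsHSAlong b A) (C : H →L[ℂ] H) :
    hsNormAlong b (C * A) ≤ ‖C‖ * hsNormAlong b A := by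
  rw [hsNormAlong, hsNormAlong, ← Real.sqrt_sq (norm_nonneg C), ← Real.sqrt_mul (sq_nonneg _),
    ← tsum_mul_left]
  exact Real.sqrt_le_sqrt
    (Summable.tsum_le_tsum (fun i => norm_mul_apply_sq_le C A (b i)) (hA.mul_left C)
      (Summable.mul_left _ hA))

theorem IsHSAlong.sum_norm_mul_norm_le {T S : H →L[ℂ] H} (hT : IsHSAlong b T)
    (hS : IsHSAlong b S) (F : Finset ι) :
    ∑ i ∈ F, ‖T (b i)‖ * ‖S (b i)‖ ≤ hsNormAlong b T * hsNormAlong b S := by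
  refine (Real.sum_mul_le_sqrt_mul_sqrt F _ _).trans (mul_le_mul ?_ ?_ (Real.sqrt_nonneg _)
    (Real.sqrt_nonneg _))
  · exact Real.sqrt_le_sqrt (Summable.sum_le_tsum F (fun _ _ => sq_nonneg _) hT)
  · exact Real.sqrt_le_sqrt (Summable.sum_le_tsum F (fun _ _ => sq_nonneg _) hS)

end HilbertSchmidt

theorem Real.abs_sqrt_sub_inv_sqrt_add_sq_mul_le {x ε : ℝ} (hx : 0 ≤ x) (hε : 0 < ε) :
    |√x - (√(x + ε ^ 2))⁻¹ * x| ≤ ε := by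
  set s := √(x + ε ^ 2)
  have hs : 0 < s := Real.sqrt_pos.mpr (by positivity)
  have hs2 : s ^ 2 = x + ε ^ 2 := Real.sq_sqrt (by positivity)
  have hr2 : √x ^ 2 = x := Real.sq_sqrt hx
  have hrs : √x ≤ s := Real.sqrt_le_sqrt (by nlinarith)
  have hr := Real.sqrt_nonneg x
  have key : √x - s⁻¹ * x = √x * (s - √x) / s := by field_simp; nlinarith
  rw [key, abs_of_nonneg (by positivity), div_le_iff₀ hs]
  nlinarith

namespace CStarAlgebra

variable {A : Type*} [CStarAlgebra A] [PartialOrder A] [StarOrderedRing A]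

theorem exists_norm_le_one_norm_sqrt_star_mul_self_sub_le (a : A) {ε : ℝ} (hε : 0 < ε) :
    ∃ w : A, ‖w‖ ≤ 1 ∧ ‖CFC.sqrt (star a * a) - star w * a‖ ≤ ε := by
  set p := star a * a
  have hp : 0 ≤ p := star_mul_self_nonneg a
  have hspec : ∀ x ∈ spectrum ℝ p, 0 ≤ x := fun x hx => spectrum_nonneg_of_nonneg hp hx
  set g : ℝ → ℝ := fun x => (√(x + ε ^ 2))⁻¹
  have hg : ContinuousOn g (spectrum ℝ p) := by
    refine (Continuous.continuousOn (by fun_prop)).inv₀ fun x hx => ?_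
    exact (Real.sqrt_pos.mpr (add_pos_of_nonneg_of_pos (hspec x hx) (by positivity))).ne'
  have hw : star (a * cfc g p) * a = cfc (fun x => g x * x) p := by
    rw [star_mul, (cfc_predicate g p).star_eq, mul_assoc,
      cfc_mul g (fun x => x) p hg continuousOn_id, cfc_id' ℝ p]
  refine ⟨a * cfc g p, ?_, ?_⟩
  · have hww : star (a * cfc g p) * (a * cfc g p) = cfc (fun x => g x * x * g x) p := by
      rw [← mul_assoc, hw, cfc_mul (fun x => g x * x) g p (hg.mul continuousOn_id) hg]
    have hww_le : ‖star (a * cfc g p) * (a * cfc g p)‖ ≤ 1 := by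
      rw [hww]
      refine norm_cfc_le zero_le_one fun x hx => ?_
      have hx0 := hspec x hx
      have hxε : 0 < x + ε ^ 2 := by positivity
      rw [Real.norm_eq_abs, abs_of_nonneg (by positivity), mul_comm, ← mul_assoc, ← mul_inv,
        Real.mul_self_sqrt hxε.le, inv_mul_le_one₀ hxε]
      linarith [sq_nonneg ε]
    rw [CStarRing.norm_star_mul_self] at hww_le
    nlinarith [norm_nonneg (a * cfc g p)]
  · rw [CFC.sqrt_eq_real_sqrt p, cfcₙ_eq_cfc, hw,
      ← cfc_sub Real.sqrt (fun x => g x * x) p Real.continuous_sqrt.continuousOn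
        (hg.mul continuousOn_id)]
    refine norm_cfc_le hε.le fun x hx => ?_
    exact Real.abs_sqrt_sub_inv_sqrt_add_sq_mul_le (hspec x hx) hε

end CStarAlgebra

section TraceClass

open ContinuousLinearMap

variable {H : Type} [NormedAddCommGroup H] [InnerProductSpace ℂ H] [CompleteSpace H]

theorem exists_norm_le_one_norm_absCLM_sub_adjoint_mul_le (B : H →L[ℂ] H) {ε : ℝ} (hε : 0 < ε) :
    ∃ W : H →L[ℂ] H, ‖W‖ ≤ 1 ∧ ‖absCLM B - adjoint W * B‖ ≤ ε := by
  simpa only [absCLM, ← star_eq_adjoint] using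
    CStarAlgebra.exists_norm_le_one_norm_sqrt_star_mul_self_sub_le B hε

theorem re_inner_absCLM_self_nonneg (B : H →L[ℂ] H) (x : H) :
    0 ≤ (⟪x, absCLM B x⟫_ℂ).re := by
  have h : 0 ≤ absCLM B := CFC.sqrt_nonneg _
  exact ((nonneg_iff_isPositive _).mp h).re_inner_nonneg_right x

variable {ι : Type} {b : HilbertBasis ι ℂ H}

theorem sum_re_inner_absCLM_mul_le {T S : H →L[ℂ] H} (hT : IsHSAlong b T)
    (hS : IsHSAlong b S) (F : Finset ι) :
    ∑ i ∈ F, (⟪b i, absCLM (T * S) (b i)⟫_ℂ).re ≤ hsNormAlong b T * hsNormAlong b S := by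
  refine le_of_forall_pos_le_add fun δ hδ => ?_
  set ε := δ / (F.card + 1)
  obtain ⟨W, hW, hWB⟩ := exists_norm_le_one_norm_absCLM_sub_adjoint_mul_le (T * S)
    (show 0 < ε by positivity)
  -- `D` plays the role of `T* U` for the polar decomposition `T S = U |T S|`
  set D := adjoint (adjoint W * T)
  have hD : IsHSAlong b D := (hT.mul_left _).adjoint
  have hDT : hsNormAlong b D ≤ hsNormAlong b T := by
    calc hsNormAlong b D = hsNormAlong b (adjoint W * T) := hsNormAlong_adjoint b _
      _ ≤ ‖adjoint W‖ * hsNormAlong b T := hT.hsNormAlong_mul_left_le _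
      _ ≤ hsNormAlong b T := by
        rw [LinearIsometryEquiv.norm_map]
        exact mul_le_of_le_one_left (Real.sqrt_nonneg _) hW
  have hterm (i : ι) :
      (⟪b i, absCLM (T * S) (b i)⟫_ℂ).re ≤ ‖D (b i)‖ * ‖S (b i)‖ + ε := by
    have hbi : ‖b i‖ = 1 := b.orthonormal.1 i
    have happrox : (⟪b i, (absCLM (T * S) - adjoint W * (T * S)) (b i)⟫_ℂ).re ≤ ε := by
      calc _ ≤ ‖b i‖ * ‖(absCLM (T * S) - adjoint W * (T * S)) (b i)‖ :=
            re_inner_le_norm (𝕜 := ℂ) _ _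
        _ ≤ ‖absCLM (T * S) - adjoint W * (T * S)‖ := by
            simpa only [hbi, one_mul, mul_one] using le_opNorm _ (b i)
        _ ≤ ε := hWB
    have hD_inner : ⟪b i, (adjoint W * (T * S)) (b i)⟫_ℂ = ⟪D (b i), S (b i)⟫_ℂ := by
      rw [adjoint_inner_left]; rfl
    calc (⟪b i, absCLM (T * S) (b i)⟫_ℂ).re
        = (⟪b i, (absCLM (T * S) - adjoint W * (T * S)) (b i)⟫_ℂ).re
          + (⟪D (b i), S (b i)⟫_ℂ).re := by
          rw [← hD_inner, ← Complex.add_re, ← inner_add_right, sub_apply, sub_add_cancel]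
      _ ≤ ε + ‖D (b i)‖ * ‖S (b i)‖ :=
          add_le_add happrox ((Complex.re_le_norm _).trans (norm_inner_le_norm _ _))
      _ = ‖D (b i)‖ * ‖S (b i)‖ + ε := add_comm _ _
  have hcard : (F.card : ℝ) * ε ≤ δ := by
    rw [mul_div_assoc', div_le_iff₀ (by positivity)]
    nlinarith
  calc ∑ i ∈ F, (⟪b i, absCLM (T * S) (b i)⟫_ℂ).re
      ≤ ∑ i ∈ F, (‖D (b i)‖ * ‖S (b i)‖ + ε) := Finset.sum_le_sum fun i _ => hterm i
    _ = ∑ i ∈ F, ‖D (b i)‖ * ‖S (b i)‖ + F.card * ε := by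
        rw [Finset.sum_add_distrib, Finset.sum_const, nsmul_eq_mul]
    _ ≤ hsNormAlong b D * hsNormAlong b S + δ := add_le_add (hD.sum_norm_mul_norm_le hS F) hcard
    _ ≤ hsNormAlong b T * hsNormAlong b S + δ := by
        gcongr
        exact Real.sqrt_nonneg _

theorem IsHSAlong.isTraceClassAlong_mul {T S : H →L[ℂ] H} (hT : IsHSAlong b T)
    (hS : IsHSAlong b S) : IsTraceClassAlong b (T * S) :=
  summable_of_sum_le (fun _ => re_inner_absCLM_self_nonneg _ _) (sum_re_inner_absCLM_mul_le hT hS)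

end TraceClass

/-- If `A` is a Hilbert–Schmidt operator on a complex separable Hilbert
space, then `(1+A)e^{-A} − 1` is a trace class operator. -/
theorem stmt_3 {H : Type}
    [NormedAddCommGroup H] [InnerProductSpace ℂ H] [CompleteSpace H]
    (b : HilbertBasis ℕ ℂ H) (A : H →L[ℂ] H) (hA : IsHSAlong b A) :
    IsTraceClassAlong b ((1 + A) * NormedSpace.exp (-A) - 1) := by
  obtain ⟨C, hC⟩ := NormedSpace.exists_one_add_mul_exp_neg_sub_one_eq_mul_mul ℂ A
  rw [hC]
  exact (hA.mul_left C).isTraceClassAlong_mul hA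
end

section
/- Let H = H₁ ⊕ H₂, let A be a bounded J-self-adjoint operator on H, and set Â := AP₁ + (1−A)P₂. If 0 ≤ Â ≤ 1 (as a self-adjoint operator), then ‖A‖ ≤ 1. -/
open scoped InnerProductSpace ComplexConjugate

/-- A self-adjoint element of a C*-algebra with `-1 ≤ a ≤ 1` has norm at most one. -/
lemma norm_le_one_of_neg_one_le_of_le_one {𝔄 : Type*} [CStarAlgebra 𝔄] [PartialOrder 𝔄]
    [StarOrderedRing 𝔄] {a : 𝔄} (ha : IsSelfAdjoint a) (h₁ : -1 ≤ a) (h₂ : a ≤ 1) :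
    ‖a‖ ≤ 1 := by
  obtain h | h := subsingleton_or_nontrivial 𝔄
  · simp [Subsingleton.elim a 0]
  have hub : ∀ x ∈ spectrum ℝ a, x ≤ 1 := by
    rw [← le_algebraMap_iff_spectrum_le (ha := ha)]
    simpa using h₂
  have hlb : ∀ x ∈ spectrum ℝ a, (-1 : ℝ) ≤ x := by
    rw [← algebraMap_le_iff_le_spectrum (ha := ha)]
    simpa using h₁
  obtain h | h := CStarAlgebra.norm_or_neg_norm_mem_spectrum ha
  · exact hub _ h
  · linarith [hlb _ h]

/-- Let `H = H₁ ⊕ H₂`, let `A` be a bounded `J`-self-adjoint operator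
on `H`, and set `Â := AP₁ + (1−A)P₂`.  If `0 ≤ Â ≤ 1`, then `‖A‖ ≤ 1`. -/
theorem stmt_5 {H : Type}
    [NormedAddCommGroup H] [InnerProductSpace ℂ H] [CompleteSpace H]
    (P₁ P₂ : H →L[ℂ] H)
    (hP₁ : IsIdempotentElem P₁) (hP₁sa : IsSelfAdjoint P₁)
    (hP₂ : IsIdempotentElem P₂) (hP₂sa : IsSelfAdjoint P₂)
    (hsum : P₁ + P₂ = 1)
    (A : H →L[ℂ] H)
    (hJ : ContinuousLinearMap.adjoint A * (P₁ - P₂) = (P₁ - P₂) * A)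
    (hpos : (A * P₁ + (1 - A) * P₂).IsPositive)
    (hle : (1 - (A * P₁ + (1 - A) * P₂)).IsPositive) :
    ‖A‖ ≤ 1 := by
  set B := A * P₁ + (1 - A) * P₂ with hB
  set J := P₁ - P₂ with hJdef
  -- basic algebra
  have hP2eq : P₂ = 1 - P₁ := by rw [← hsum]; abel
  have hJ2 : J * J = 1 := by
    have h12 : P₁ * P₂ = 0 := by
      rw [hP2eq, mul_sub, mul_one, hP₁.eq, sub_self]
    have h21 : P₂ * P₁ = 0 := by
      rw [hP2eq, sub_mul, one_mul, hP₁.eq, sub_self]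
    have : J * J = P₁ * P₁ - P₁ * P₂ - P₂ * P₁ + P₂ * P₂ := by
      rw [hJdef]; noncomm_ring
    rw [this, hP₁.eq, hP₂.eq, h12, h21, ← hsum]; abel
  have hA : A = (B - P₂) * J := by
    have h1 : (B - P₂) * J = A * (J * J) := by rw [hB, hJdef]; noncomm_ring
    rw [h1, hJ2, mul_one]
  -- positivity facts, via the Loewner order
  have hBnn : (0 : H →L[ℂ] H) ≤ B := (ContinuousLinearMap.nonneg_iff_isPositive B).mpr hpos
  have hBle : B ≤ 1 := by
    rw [ContinuousLinearMap.le_def]; exact hle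
  have hP₁nn : (0 : H →L[ℂ] H) ≤ P₁ := by
    have := star_mul_self_nonneg P₁
    rwa [hP₁sa.star_eq, hP₁.eq] at this
  have hP₂nn : (0 : H →L[ℂ] H) ≤ P₂ := by
    have := star_mul_self_nonneg P₂
    rwa [hP₂sa.star_eq, hP₂.eq] at this
  -- the central piece is self-adjoint with -1 ≤ B - P₂ ≤ 1
  have hTsa : IsSelfAdjoint (B - P₂) := hpos.isSelfAdjoint.sub hP₂sa
  have hT₁ : -1 ≤ B - P₂ := by
    have : (0 : H →L[ℂ] H) ≤ B + P₁ := add_nonneg hBnn hP₁nn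
    have h' : B + P₁ = (B - P₂) - (-1) := by rw [← hsum]; abel
    rw [h'] at this
    exact sub_nonneg.mp this
  have hT₂ : B - P₂ ≤ 1 := le_trans (by simpa using sub_le_self B hP₂nn) hBle
  have hTnorm : ‖B - P₂‖ ≤ 1 := norm_le_one_of_neg_one_le_of_le_one hTsa hT₁ hT₂
  -- J is self-adjoint with J² = 1, so ‖J‖ ≤ 1
  have hJsa : IsSelfAdjoint J := hP₁sa.sub hP₂sa
  have hJnorm : ‖J‖ ≤ 1 := by
    have h1 : ‖J‖ * ‖J‖ = ‖J * J‖ := by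
      rw [← CStarRing.norm_star_mul_self, hJsa.star_eq]
    have h2 : ‖J * J‖ ≤ 1 := by rw [hJ2]; exact ContinuousLinearMap.norm_id_le
    nlinarith [norm_nonneg J]
  calc ‖A‖ = ‖(B - P₂) * J‖ := by rw [← hA]
    _ ≤ ‖B - P₂‖ * ‖J‖ := norm_mul_le _ _
    _ ≤ 1 * 1 := mul_le_mul hTnorm hJnorm (norm_nonneg _) (by linarith)
    _ = 1 := one_mul 1
end

section
/- Let H = H₁ ⊕ H₂ and A a bounded J-self-adjoint operator with 0 ≤ Â ≤ 1, where Â := AP₁ + (1−A)P₂. Write A in block form with A_even = P₁AP₁ + P₂AP₂. Then ‖A‖ = 1 if and only if ‖A_even‖ = 1. -/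
open scoped InnerProductSpace ComplexConjugate

/-!
With `u = 2P₂ - 1`, a self-adjoint unitary, one has `P₂ - Â = A u`, so `‖A‖ = ‖P₂ - Â‖`, and
`2 A_even = A + u A u`, so `‖A_even‖ ≤ ‖A‖`. On the other hand
`A_even = (P₂ - Â)² + Â(1 - Â)`, and `Â(1 - Â) = Â(1 - Â)Â + (1 - Â)Â(1 - Â) ≥ 0` when
`0 ≤ Â ≤ 1`; hence `‖A‖² = ‖(P₂ - Â)²‖ ≤ ‖A_even‖`. The two bounds `‖A‖² ≤ ‖A_even‖ ≤ ‖A‖`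
force `‖A‖ = 1 ↔ ‖A_even‖ = 1`.
-/

section Ring

variable {R : Type*} [Ring R]

-- `p` stands for `P₂` and `1 - p` for `P₁`: `evenPart p a` is `A_even` and `hatOp p a` is `Â`.
def evenPart (p a : R) : R := (1 - p) * a * (1 - p) + p * a * p

def hatOp (p a : R) : R := a * (1 - p) + (1 - a) * p

lemma sub_hatOp (p a : R) : p - hatOp p a = a * (2 * p - 1) := by
  unfold hatOp; noncomm_ring

lemma evenPart_add_self (p a : R) :
    evenPart p a + evenPart p a = a + (2 * p - 1) * a * (2 * p - 1) := by
  unfold evenPart; noncomm_ring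

lemma mul_one_sub_eq_conj_add_conj (h : R) :
    h * (1 - h) = h * (1 - h) * h + (1 - h) * h * (1 - h) := by
  noncomm_ring

lemma IsIdempotentElem.evenPart_eq {p : R} (hp : IsIdempotentElem p) (a : R) :
    evenPart p a = (p - hatOp p a) * (p - hatOp p a) + hatOp p a * (1 - hatOp p a) := by
  unfold evenPart hatOp
  simp only [mul_add, add_mul, sub_mul, mul_sub, mul_one, one_mul, ← mul_assoc, hp.eq,
    hp.mul_mul_self]
  abel

end Ring

lemma mul_one_sub_nonneg {R : Type*} [Ring R] [PartialOrder R] [StarRing R] [StarOrderedRing R]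
    {h : R} (h₀ : 0 ≤ h) (h₁ : h ≤ 1) : 0 ≤ h * (1 - h) := by
  rw [mul_one_sub_eq_conj_add_conj]
  exact add_nonneg (conjugate_nonneg_of_nonneg (sub_nonneg.2 h₁) h₀)
    (conjugate_nonneg_of_nonneg h₀ (sub_nonneg.2 h₁))

section CStarAlgebra

variable {A : Type*} [CStarAlgebra A] {p : A}

lemma IsStarProjection.norm_evenPart_le (hp : IsStarProjection p) (a : A) :
    ‖evenPart p a‖ ≤ ‖a‖ := by
  have hu := hp.two_mul_sub_one_mem_unitary
  have h : ‖evenPart p a + evenPart p a‖ ≤ ‖a‖ + ‖a‖ := by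
    rw [evenPart_add_self]
    refine (norm_add_le _ _).trans_eq ?_
    rw [CStarRing.norm_mul_mem_unitary _ hu, CStarRing.norm_mem_unitary_mul _ hu]
  rw [← two_nsmul, ← two_nsmul, RCLike.norm_nsmul ℂ] at h
  simpa using h

lemma IsStarProjection.norm_sq_le_norm_evenPart [PartialOrder A] [StarOrderedRing A]
    (hp : IsStarProjection p) {a : A} (h₀ : 0 ≤ hatOp p a) (h₁ : hatOp p a ≤ 1) :
    ‖a‖ ^ 2 ≤ ‖evenPart p a‖ := by
  have hb : IsSelfAdjoint (p - hatOp p a) := hp.isSelfAdjoint.sub (.of_nonneg h₀)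
  calc ‖a‖ ^ 2 = ‖(p - hatOp p a) * (p - hatOp p a)‖ := by
        rw [hb.norm_mul_self, sub_hatOp, CStarRing.norm_mul_mem_unitary _
          hp.two_mul_sub_one_mem_unitary, sq]
    _ ≤ ‖evenPart p a‖ := by
        refine CStarAlgebra.norm_le_norm_of_nonneg_of_le hb.mul_self_nonneg ?_
        rw [hp.isIdempotentElem.evenPart_eq]
        exact le_add_of_nonneg_right (mul_one_sub_nonneg h₀ h₁)

end CStarAlgebra

lemma eq_one_iff_of_sq_le_of_le {x y : ℝ} (hxy : x ^ 2 ≤ y) (hyx : y ≤ x) : x = 1 ↔ y = 1 := by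
  constructor
  · rintro rfl
    linarith
  · rintro rfl
    nlinarith

theorem stmt_6_general {H : Type}
    [NormedAddCommGroup H] [InnerProductSpace ℂ H] [CompleteSpace H]
    (P₁ P₂ : H →L[ℂ] H)
    (hP₂ : IsIdempotentElem P₂) (hP₂sa : IsSelfAdjoint P₂)
    (hsum : P₁ + P₂ = 1)
    (A : H →L[ℂ] H)
    (hpos : (A * P₁ + (1 - A) * P₂).IsPositive)
    (hle : (1 - (A * P₁ + (1 - A) * P₂)).IsPositive) :
    ‖A‖ = 1 ↔ ‖P₁ * A * P₁ + P₂ * A * P₂‖ = 1 := by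
  obtain rfl : P₁ = 1 - P₂ := eq_sub_of_add_eq hsum
  have hp : IsStarProjection P₂ := ⟨hP₂, hP₂sa⟩
  rw [← ContinuousLinearMap.nonneg_iff_isPositive] at hpos
  rw [← ContinuousLinearMap.nonneg_iff_isPositive, sub_nonneg] at hle
  exact eq_one_iff_of_sq_le_of_le (hp.norm_sq_le_norm_evenPart hpos hle) (hp.norm_evenPart_le A)

/-- Let `H = H₁ ⊕ H₂` and `A` a bounded `J`-self-adjoint operator with
`0 ≤ Â ≤ 1`, where `Â := AP₁ + (1−A)P₂`.  With `A_even := P₁AP₁ + P₂AP₂` the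
block-diagonal part of `A`, one has `‖A‖ = 1` if and only if `‖A_even‖ = 1`. -/
theorem stmt_6 {H : Type}
    [NormedAddCommGroup H] [InnerProductSpace ℂ H] [CompleteSpace H]
    (P₁ P₂ : H →L[ℂ] H)
    (hP₁ : IsIdempotentElem P₁) (hP₁sa : IsSelfAdjoint P₁)
    (hP₂ : IsIdempotentElem P₂) (hP₂sa : IsSelfAdjoint P₂)
    (hsum : P₁ + P₂ = 1)
    (A : H →L[ℂ] H)
    (hJ : ContinuousLinearMap.adjoint A * (P₁ - P₂) = (P₁ - P₂) * A)
    (hpos : (A * P₁ + (1 - A) * P₂).IsPositive)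
    (hle : (1 - (A * P₁ + (1 - A) * P₂)).IsPositive) :
    ‖A‖ = 1 ↔ ‖P₁ * A * P₁ + P₂ * A * P₂‖ = 1 :=
  stmt_6_general P₁ P₂ hP₂ hP₂sa hsum A hpos hle
end

section
/- Let A be a finite complex square matrix written in 2×2 block form with respect to a splitting of the index set, such that A₁₁* = A₁₁, A₂₂* = A₂₂, and A₂₁* = −A₁₂ (A is J-Hermitian). If the diagonal blocks A₁₁ and A₂₂ are positive semidefinite, then det(A) ≥ 0. -/
open scoped InnerProductSpace ComplexConjugate

section Aux
open scoped ComplexOrder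

private lemma cmul_pos' {z w : ℂ} (hz : 0 < z) (hw : 0 < w) : 0 < z * w := by
  rw [Complex.lt_def] at *
  obtain ⟨hz1, hz2⟩ := hz; obtain ⟨hw1, hw2⟩ := hw
  simp only [Complex.zero_re, Complex.zero_im] at *
  constructor
  · simp [Complex.mul_re, ← hz2, ← hw2]; positivity
  · simp [Complex.mul_im, ← hz2, ← hw2]

private lemma smul_one_posDef' {m : Type} [Fintype m] [DecidableEq m] {ε : ℝ} (hε : 0 < ε) :
    ((ε : ℂ) • (1 : Matrix m m ℂ)).PosDef := by
  rw [Matrix.smul_one_eq_diagonal, Matrix.posDef_diagonal_iff]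
  intro i; exact_mod_cast hε

private lemma det_pos_aux' {n m : Type} [Fintype n] [Fintype m] [DecidableEq n] [DecidableEq m]
    (A₁₁ : Matrix n n ℂ) (A₁₂ : Matrix n m ℂ) (A₂₂ : Matrix m m ℂ)
    (h₁₁ : A₁₁.PosSemidef) (h₂₂ : A₂₂.PosSemidef) {ε : ℝ} (hε : 0 < ε) :
    0 < (Matrix.fromBlocks (A₁₁ + (ε : ℂ) • 1) A₁₂ (-A₁₂.conjTranspose)
        (A₂₂ + (ε : ℂ) • 1)).det := by
  have hP : (A₁₁ + (ε : ℂ) • 1).PosDef := Matrix.PosDef.posSemidef_add h₁₁ (smul_one_posDef' hε)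
  have := hP.isUnit.invertible
  rw [Matrix.det_fromBlocks₁₁, Matrix.invOf_eq_nonsing_inv]
  have hC : (A₁₂.conjTranspose * (A₁₁ + (ε : ℂ) • 1)⁻¹ * A₁₂).PosSemidef := by
    simpa using hP.inv.posSemidef.mul_mul_conjTranspose_same A₁₂.conjTranspose
  have hS : ((A₂₂ + (ε : ℂ) • 1) - (-A₁₂.conjTranspose) * (A₁₁ + (ε : ℂ) • 1)⁻¹ * A₁₂).PosDef := by
    rw [Matrix.neg_mul, Matrix.neg_mul, sub_neg_eq_add]
    exact (Matrix.PosDef.posSemidef_add h₂₂ (smul_one_posDef' hε)).add_posSemidef hC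
  exact cmul_pos' hP.det_pos hS.det_pos

end Aux

open scoped ComplexOrder in
/-- Let `A` be a finite complex matrix in `2×2` block form which is
`J`-Hermitian: the diagonal blocks `A₁₁, A₂₂` are Hermitian and the off-diagonal blocks
satisfy `A₂₁* = −A₁₂`.  If `A₁₁` and `A₂₂` are positive semidefinite, then `det A ≥ 0`
(in particular `det A` is real). -/
theorem stmt_8 {n m : Type} [Fintype n] [Fintype m] [DecidableEq n] [DecidableEq m]
    (A₁₁ : Matrix n n ℂ) (A₁₂ : Matrix n m ℂ) (A₂₁ : Matrix m n ℂ) (A₂₂ : Matrix m m ℂ)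
    (h₁₁ : A₁₁.PosSemidef) (h₂₂ : A₂₂.PosSemidef)
    (hJ : A₂₁.conjTranspose = -A₁₂) :
    0 ≤ ((Matrix.fromBlocks A₁₁ A₁₂ A₂₁ A₂₂).det).re ∧
      ((Matrix.fromBlocks A₁₁ A₁₂ A₂₁ A₂₂).det).im = 0 := by
  have hA₂₁ : A₂₁ = -A₁₂.conjTranspose := by
    have := congrArg Matrix.conjTranspose hJ
    simpa using this
  subst hA₂₁
  set f : ℝ → ℂ := fun ε => (Matrix.fromBlocks (A₁₁ + (ε : ℂ) • 1) A₁₂ (-A₁₂.conjTranspose)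
      (A₂₂ + (ε : ℂ) • 1)).det with hf
  have hf0 : f 0 = (Matrix.fromBlocks A₁₁ A₁₂ (-A₁₂.conjTranspose) A₂₂).det := by
    simp [hf]
  have hcont : Continuous f := by
    apply Continuous.matrix_det
    apply Continuous.matrix_fromBlocks
    · exact continuous_const.add (Complex.continuous_ofReal.smul continuous_const)
    · exact continuous_const
    · exact continuous_const
    · exact continuous_const.add (Complex.continuous_ofReal.smul continuous_const)
  have htend : Filter.Tendsto f (nhdsWithin 0 (Set.Ioi 0)) (nhds (f 0)) :=
    (hcont.tendsto 0).mono_left nhdsWithin_le_nhds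
  have hev : ∀ᶠ ε in nhdsWithin (0:ℝ) (Set.Ioi 0), 0 < f ε := by
    filter_upwards [self_mem_nhdsWithin] with ε hε
    exact det_pos_aux' A₁₁ A₁₂ A₂₂ h₁₁ h₂₂ hε
  rw [← hf0]
  constructor
  · refine ge_of_tendsto ((Complex.continuous_re.tendsto _).comp htend) ?_
    filter_upwards [hev] with ε hε
    simpa using (Complex.lt_def.mp hε).1.le
  · refine tendsto_nhds_unique ((Complex.continuous_im.tendsto _).comp htend) ?_
    refine Filter.Tendsto.congr' ?_ tendsto_const_nhds
    filter_upwards [hev] with ε hε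
    simpa using (Complex.lt_def.mp hε).2
end

section
/- Let H = H₁ ⊕ H₂ and let K be a bounded J-self-adjoint operator on H with 0 ≤ K̂ ≤ 1, where K̂ := KP₁ + (1−K)P₂. If Q₁ is an orthogonal projection with range contained in H₁ such that Q₁K̂Q₁ is trace class, and Q₂ is an orthogonal projection with range in H₂ such that Q₂(1−K̂)Q₂ is trace class, then K(Q₁+Q₂) is a Hilbert–Schmidt operator. -/
/-! On the range of `Q₁ ⊆ H₁` the operator `K` acts as `K̂`, and on the range of `Q₂ ⊆ H₂` as
`1 - K̂`, so `K(Q₁ + Q₂) = K̂Q₁ + (1 - K̂)Q₂`. For `0 ≤ T ≤ 1` we have `T² ≤ T`, hence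
`‖TQx‖² = ⟪x, QT²Qx⟫ ≤ ⟪x, QTQx⟫`: the Hilbert–Schmidt sum of `TQ` is dominated by the trace
of the positive operator `QTQ`. -/

open scoped InnerProductSpace ComplexConjugate

section Order

variable {A : Type*} [CStarAlgebra A] [PartialOrder A] [StarOrderedRing A]

lemma mul_self_le_self_of_nonneg_of_le_one {a : A} (h0 : 0 ≤ a) (h1 : a ≤ 1) : a * a ≤ a := by
  obtain ⟨s, hs, rfl⟩ : ∃ s : A, IsSelfAdjoint s ∧ s * s = a :=
    ⟨CFC.sqrt a, (CFC.sqrt_nonneg a).isSelfAdjoint, CFC.sqrt_mul_sqrt_self a h0⟩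
  have hconj := star_left_conjugate_nonneg (sub_nonneg.2 h1) s
  rw [hs.star_eq] at hconj
  -- `s² - s⁴ = s (1 - s²) s`
  refine sub_nonneg.1 ?_
  convert hconj using 1
  noncomm_ring

end Order

section Operator

variable {H : Type} [NormedAddCommGroup H] [InnerProductSpace ℂ H] [CompleteSpace H]

lemma absCLM_of_nonneg {A : H →L[ℂ] H} (hA : 0 ≤ A) : absCLM A = A := by
  rw [absCLM, ← ContinuousLinearMap.star_eq_adjoint, hA.isSelfAdjoint.star_eq,
    CFC.sqrt_mul_self A hA]

lemma norm_apply_sq_le_re_inner_apply {T : H →L[ℂ] H} (h0 : 0 ≤ T) (h1 : T ≤ 1) (x : H) :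
    ‖T x‖ ^ 2 ≤ (⟪x, T x⟫_ℂ).re := by
  have hT : T.IsPositive := (ContinuousLinearMap.nonneg_iff_isPositive T).1 h0
  have hgap := ((ContinuousLinearMap.le_def _ _).1
    (mul_self_le_self_of_nonneg_of_le_one h0 h1)).re_inner_nonneg_right x
  have hnorm : ‖T x‖ ^ 2 = (⟪x, (T * T) x⟫_ℂ).re := by
    rw [← inner_self_eq_norm_sq (𝕜 := ℂ), hT.inner_left_eq_inner_right]
    rfl
  rw [sub_apply, inner_sub_right, map_sub, RCLike.re_to_complex, RCLike.re_to_complex] at hgap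
  linarith

lemma IsHSAlong.add {ι : Type} {b : HilbertBasis ι ℂ H} {S T : H →L[ℂ] H}
    (hS : IsHSAlong b S) (hT : IsHSAlong b T) : IsHSAlong b (S + T) := by
  refine .of_nonneg_of_le (fun i => by positivity) (fun i => ?_) ((Summable.add hS hT).mul_left 2)
  calc ‖(S + T) (b i)‖ ^ 2 ≤ (‖S (b i)‖ + ‖T (b i)‖) ^ 2 := by
        gcongr; exact norm_add_le _ _
    _ ≤ 2 * (‖S (b i)‖ ^ 2 + ‖T (b i)‖ ^ 2) := add_sq_le

lemma isHSAlong_mul_of_isTraceClassAlong {ι : Type} {b : HilbertBasis ι ℂ H} {T Q : H →L[ℂ] H}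
    (h0 : 0 ≤ T) (h1 : T ≤ 1) (hQ : IsSelfAdjoint Q) (htc : IsTraceClassAlong b (Q * T * Q)) :
    IsHSAlong b (T * Q) := by
  have hQTQ : 0 ≤ Q * T * Q := by simpa [hQ.star_eq] using star_left_conjugate_nonneg h0 Q
  rw [IsTraceClassAlong, absCLM_of_nonneg hQTQ] at htc
  refine .of_nonneg_of_le (fun i => by positivity) (fun i => ?_) htc
  calc ‖(T * Q) (b i)‖ ^ 2 ≤ (⟪Q (b i), T (Q (b i))⟫_ℂ).re :=
        norm_apply_sq_le_re_inner_apply h0 h1 (Q (b i))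
    _ = (⟪b i, (Q * T * Q) (b i)⟫_ℂ).re := congrArg _ (hQ.isSymmetric _ _)

end Operator

section Splitting

variable {R : Type*} [Ring R]

def kHat (K P₁ P₂ : R) : R := K * P₁ + (1 - K) * P₂

variable {K P₁ P₂ Q : R}

lemma kHat_mul_of_mul_eq_self (hsum : P₁ + P₂ = 1) (hQ : P₁ * Q = Q) :
    kHat K P₁ P₂ * Q = K * Q := by
  have hP₂Q : P₂ * Q = 0 := by rw [eq_sub_of_add_eq' hsum, sub_mul, one_mul, hQ, sub_self]
  rw [kHat, add_mul, mul_assoc, mul_assoc, hQ, hP₂Q, mul_zero, add_zero]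

lemma one_sub_kHat_mul_of_mul_eq_self (hsum : P₁ + P₂ = 1) (hQ : P₂ * Q = Q) :
    (1 - kHat K P₁ P₂) * Q = K * Q := by
  have hP₁Q : P₁ * Q = 0 := by rw [eq_sub_of_add_eq hsum, sub_mul, one_mul, hQ, sub_self]
  rw [kHat, sub_mul, add_mul, mul_assoc, mul_assoc, hQ, hP₁Q, mul_zero, zero_add, one_mul,
    sub_mul, one_mul, sub_sub_cancel]

end Splitting

theorem stmt_13_general {H : Type}
    [NormedAddCommGroup H] [InnerProductSpace ℂ H] [CompleteSpace H]
    (b : HilbertBasis ℕ ℂ H) (P₁ P₂ : H →L[ℂ] H)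
    (hsum : P₁ + P₂ = 1)
    (K : H →L[ℂ] H)
    (hpos : (K * P₁ + (1 - K) * P₂).IsPositive)
    (hle : (1 - (K * P₁ + (1 - K) * P₂)).IsPositive)
    (Q₁ : H →L[ℂ] H) (hQ₁sa : IsSelfAdjoint Q₁)
    (hQ₁ran : P₁ * Q₁ = Q₁)
    (hQ₁tc : IsTraceClassAlong b (Q₁ * (K * P₁ + (1 - K) * P₂) * Q₁))
    (Q₂ : H →L[ℂ] H) (hQ₂sa : IsSelfAdjoint Q₂)
    (hQ₂ran : P₂ * Q₂ = Q₂)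
    (hQ₂tc : IsTraceClassAlong b (Q₂ * (1 - (K * P₁ + (1 - K) * P₂)) * Q₂)) :
    IsHSAlong b (K * (Q₁ + Q₂)) := by
  have h0 : 0 ≤ kHat K P₁ P₂ := (ContinuousLinearMap.nonneg_iff_isPositive _).2 hpos
  have h1 : kHat K P₁ P₂ ≤ 1 := sub_nonneg.1 ((ContinuousLinearMap.nonneg_iff_isPositive _).2 hle)
  have hKQ : K * (Q₁ + Q₂) = kHat K P₁ P₂ * Q₁ + (1 - kHat K P₁ P₂) * Q₂ := by
    rw [kHat_mul_of_mul_eq_self hsum hQ₁ran, one_sub_kHat_mul_of_mul_eq_self hsum hQ₂ran, mul_add]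
  rw [hKQ]
  exact (isHSAlong_mul_of_isTraceClassAlong h0 h1 hQ₁sa hQ₁tc).add
    (isHSAlong_mul_of_isTraceClassAlong (sub_nonneg.2 h1) (sub_le_self 1 h0) hQ₂sa hQ₂tc)

/-- Let `H = H₁ ⊕ H₂` and let `K` be a bounded `J`-self-adjoint operator
with `0 ≤ K̂ ≤ 1`, where `K̂ := KP₁ + (1−K)P₂`.  If `Q₁` is an orthogonal projection with
range contained in `H₁` such that `Q₁K̂Q₁` is trace class, and `Q₂` is an orthogonal
projection with range contained in `H₂` such that `Q₂(1−K̂)Q₂` is trace class, then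
`K(Q₁+Q₂)` is a Hilbert–Schmidt operator. -/
theorem stmt_13 {H : Type}
    [NormedAddCommGroup H] [InnerProductSpace ℂ H] [CompleteSpace H]
    (b : HilbertBasis ℕ ℂ H) (P₁ P₂ : H →L[ℂ] H)
    (hP₁ : IsIdempotentElem P₁) (hP₁sa : IsSelfAdjoint P₁)
    (hP₂ : IsIdempotentElem P₂) (hP₂sa : IsSelfAdjoint P₂)
    (hsum : P₁ + P₂ = 1)
    (K : H →L[ℂ] H)
    (hJ : ContinuousLinearMap.adjoint K * (P₁ - P₂) = (P₁ - P₂) * K)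
    (hpos : (K * P₁ + (1 - K) * P₂).IsPositive)
    (hle : (1 - (K * P₁ + (1 - K) * P₂)).IsPositive)
    (Q₁ : H →L[ℂ] H) (hQ₁ : IsIdempotentElem Q₁) (hQ₁sa : IsSelfAdjoint Q₁)
    (hQ₁ran : P₁ * Q₁ = Q₁)
    (hQ₁tc : IsTraceClassAlong b (Q₁ * (K * P₁ + (1 - K) * P₂) * Q₁))
    (Q₂ : H →L[ℂ] H) (hQ₂ : IsIdempotentElem Q₂) (hQ₂sa : IsSelfAdjoint Q₂)
    (hQ₂ran : P₂ * Q₂ = Q₂)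
    (hQ₂tc : IsTraceClassAlong b (Q₂ * (1 - (K * P₁ + (1 - K) * P₂)) * Q₂)) :
    IsHSAlong b (K * (Q₁ + Q₂)) :=
  stmt_13_general b P₁ P₂ hsum K hpos hle Q₁ hQ₁sa hQ₁ran hQ₁tc Q₂ hQ₂sa hQ₂ran hQ₂tc
end

section
/- With G : H₁ → H₂ bounded, L = [[0,G],[−G*,0]] on H = H₁ ⊕ H₂, and K := L(1+L)⁻¹, the blocks of K are K₁₁ = G*G(1+G*G)⁻¹, K₂₂ = GG*(1+GG*)⁻¹, K₂₁ = G(1+G*G)⁻¹, K₁₂ = −G*(1+GG*)⁻¹; in particular K is J-self-adjoint. -/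
open scoped InnerProductSpace ComplexConjugate

/-!
`L` is skew-adjoint, so `re ⟪(1 + L) x, x⟫ = ‖x‖²` and `1 + L` is invertible, with inverse the
block matrix `[[S₁, G* S₂], [-G S₁, S₂]]`, where `S₁ = (1 + G* G)⁻¹` and `S₂ = (1 + G G*)⁻¹`;
multiplying by `L` gives the blocks of `K`. The `J`-self-adjointness needs no blocks: from
`L* = -L` and `J L = -L J` one gets `J (1 + L) = (1 - L) J`, hence
`K* J = (1 - L)⁻¹ (-L) J = (1 - L)⁻¹ J L (1 + L) (1 + L)⁻¹ = J L (1 + L)⁻¹ = J K`.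
-/

open ContinuousLinearMap

theorem star_mul_inverse_one_add_mul_of_anticommute {R : Type*} [Ring R] [StarRing R]
    {L J : R} (hL : star L = -L) (hJL : J * L = -(L * J)) (hu : IsUnit (1 + L)) :
    star (L * Ring.inverse (1 + L)) * J = J * (L * Ring.inverse (1 + L)) := by
  have hstar : star (1 + L) = 1 - L := by rw [star_add, star_one, hL, sub_eq_add_neg]
  have hu' : IsUnit (1 - L) := hstar ▸ hu.star
  have hJ : J * (1 + L) = (1 - L) * J := by
    rw [mul_add, hJL, mul_one, sub_mul, one_mul, sub_eq_add_neg]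
  have hcomm : L * (1 + L) = (1 + L) * L := by noncomm_ring
  set r := Ring.inverse (1 + L)
  set s := Ring.inverse (1 - L)
  calc star (L * r) * J = s * (J * L) * ((1 + L) * r) := by
        rw [star_mul, ← Ring.inverse_star, hstar, hL, Ring.mul_inverse_cancel _ hu, mul_one,
          mul_assoc, neg_mul, ← hJL]
    _ = s * (J * (1 + L)) * (L * r) := by
        simp only [mul_assoc]
        rw [← mul_assoc L, hcomm, mul_assoc]
    _ = J * (L * r) := by rw [hJ, ← mul_assoc s (1 - L) J, Ring.inverse_mul_cancel _ hu', one_mul]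

theorem inverse_one_add_comp_apply_add {R M N : Type*} [Ring R] [TopologicalSpace M]
    [AddCommGroup M] [IsTopologicalAddGroup M] [Module R M] [TopologicalSpace N]
    [AddCommGroup N] [Module R N] (A : M →L[R] N) (B : N →L[R] M)
    (hu : IsUnit (1 + B.comp A)) (x : M) :
    Ring.inverse (1 + B.comp A) x + B (A (Ring.inverse (1 + B.comp A) x)) = x := by
  simpa using congrArg (· x) (Ring.mul_inverse_cancel _ hu)

section InnerProductSpace

variable {𝕜 E F : Type*} [RCLike 𝕜] [NormedAddCommGroup E] [InnerProductSpace 𝕜 E]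
  [CompleteSpace E] [NormedAddCommGroup F] [InnerProductSpace 𝕜 F] [CompleteSpace F]

theorem isUnit_one_add_of_re_inner_nonneg (A : E →L[𝕜] E)
    (hA : ∀ x, 0 ≤ RCLike.re ⟪A x, x⟫_𝕜) : IsUnit (1 + A) := by
  refine isUnit_of_forall_le_norm_inner_map _ one_pos fun x => ?_
  calc ‖x‖ ^ 2 * ((1 : NNReal) : ℝ) ≤ RCLike.re ⟪x, x⟫_𝕜 + RCLike.re ⟪A x, x⟫_𝕜 := by
        rw [NNReal.coe_one, mul_one, ← inner_self_eq_norm_sq (𝕜 := 𝕜)]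
        linarith [hA x]
    _ = RCLike.re ⟪(1 + A) x, x⟫_𝕜 := by rw [add_apply, one_apply_eq_self, inner_add_left, map_add]
    _ ≤ ‖⟪(1 + A) x, x⟫_𝕜‖ := RCLike.re_le_norm _

theorem isUnit_one_add_adjoint_comp_self (G : E →L[𝕜] F) : IsUnit (1 + (adjoint G).comp G) :=
  isUnit_one_add_of_re_inner_nonneg _ fun x => by
    rw [comp_apply, adjoint_inner_left]
    exact inner_self_nonneg

theorem isUnit_one_add_of_adjoint_eq_neg (L : E →L[𝕜] E) (hL : adjoint L = -L) :
    IsUnit (1 + L) :=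
  isUnit_one_add_of_re_inner_nonneg _ fun x => by
    have h : ⟪L x, x⟫_𝕜 = -⟪x, L x⟫_𝕜 := by
      rw [← adjoint_inner_right, hL, neg_apply, inner_neg_right]
    have h' := congrArg RCLike.re h
    rw [map_neg, inner_re_symm (𝕜 := 𝕜) x] at h'
    linarith

theorem adjoint_eq_neg_of_skew_blocks {G : E →L[𝕜] F}
    {L : WithLp 2 (E × F) →L[𝕜] WithLp 2 (E × F)}
    (hL : ∀ f : WithLp 2 (E × F), WithLp.equiv 2 (E × F) (L f) =
      (-(adjoint G) (WithLp.equiv 2 (E × F) f).2, G (WithLp.equiv 2 (E × F) f).1)) :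
    adjoint L = -L := by
  refine ((eq_adjoint_iff (-L) L).2 fun f g => ?_).symm
  simp only [WithLp.equiv_apply] at hL
  rw [neg_apply, inner_neg_left, WithLp.prod_inner_apply, WithLp.prod_inner_apply, hL, hL]
  simp only [inner_neg_left, inner_neg_right, adjoint_inner_left, adjoint_inner_right]
  ring

theorem anticommute_of_skew_blocks {G : E →L[𝕜] F}
    {L : WithLp 2 (E × F) →L[𝕜] WithLp 2 (E × F)}
    (hL : ∀ f : WithLp 2 (E × F), WithLp.equiv 2 (E × F) (L f) =
      (-(adjoint G) (WithLp.equiv 2 (E × F) f).2, G (WithLp.equiv 2 (E × F) f).1))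
    {P₁ P₂ : WithLp 2 (E × F) →L[𝕜] WithLp 2 (E × F)}
    (hP₁ : ∀ f : WithLp 2 (E × F),
      WithLp.equiv 2 (E × F) (P₁ f) = ((WithLp.equiv 2 (E × F) f).1, 0))
    (hP₂ : ∀ f : WithLp 2 (E × F),
      WithLp.equiv 2 (E × F) (P₂ f) = (0, (WithLp.equiv 2 (E × F) f).2)) :
    (P₁ - P₂) * L = -(L * (P₁ - P₂)) := by
  ext f
  apply (WithLp.equiv 2 (E × F)).injective
  simp only [WithLp.equiv_apply] at hL hP₁ hP₂
  simp [hL, hP₁, hP₂]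

theorem inverse_one_add_apply_of_skew_blocks {G : E →L[𝕜] F}
    {L : WithLp 2 (E × F) →L[𝕜] WithLp 2 (E × F)}
    (hL : ∀ f : WithLp 2 (E × F), WithLp.equiv 2 (E × F) (L f) =
      (-(adjoint G) (WithLp.equiv 2 (E × F) f).2, G (WithLp.equiv 2 (E × F) f).1))
    (f : WithLp 2 (E × F)) :
    WithLp.equiv 2 (E × F) (Ring.inverse (1 + L) f) =
      (Ring.inverse (1 + (adjoint G).comp G) (WithLp.equiv 2 (E × F) f).1 +
          adjoint G (Ring.inverse (1 + G.comp (adjoint G)) (WithLp.equiv 2 (E × F) f).2),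
        Ring.inverse (1 + G.comp (adjoint G)) (WithLp.equiv 2 (E × F) f).2 -
          G (Ring.inverse (1 + (adjoint G).comp G) (WithLp.equiv 2 (E × F) f).1)) := by
  have hU : IsUnit (1 + L) :=
    isUnit_one_add_of_adjoint_eq_neg L (adjoint_eq_neg_of_skew_blocks hL)
  have hU₁ := isUnit_one_add_adjoint_comp_self G
  have hU₂ : IsUnit (1 + G.comp (adjoint G)) := by
    simpa using isUnit_one_add_adjoint_comp_self (adjoint G)
  simp only [WithLp.equiv_apply] at hL ⊢
  set S₁ := Ring.inverse (1 + (adjoint G).comp G)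
  set S₂ := Ring.inverse (1 + G.comp (adjoint G))
  set g : WithLp 2 (E × F) :=
    WithLp.toLp 2 (S₁ f.ofLp.1 + adjoint G (S₂ f.ofLp.2), S₂ f.ofLp.2 - G (S₁ f.ofLp.1))
  have hg : (1 + L) g = f := by
    apply (WithLp.equiv 2 (E × F)).injective
    simp only [WithLp.equiv_apply, add_apply, one_apply_eq_self, WithLp.ofLp_add, hL]
    ext
    · simp only [g, map_add, map_sub, Prod.fst_add]
      conv_rhs => rw [← inverse_one_add_comp_apply_add G (adjoint G) hU₁ f.ofLp.1]
      abel
    · simp only [g, map_add, map_sub, Prod.snd_add]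
      conv_rhs => rw [← inverse_one_add_comp_apply_add (adjoint G) G hU₂ f.ofLp.2]
      abel
  have hinv : Ring.inverse (1 + L) f = g := by
    rw [← hg, ← mul_apply_eq_comp, Ring.inverse_mul_cancel _ hU, one_apply_eq_self]
  rw [hinv]

end InnerProductSpace

/-- With `G : H₁ → H₂` bounded, `L` the operator on `H = H₁ ⊕ H₂`
(realized as `WithLp 2 (H₁ × H₂)`) with blocks `L₂₁ = G`, `L₁₂ = −G*`, zero diagonal
blocks, and `K := L(1+L)⁻¹`, the blocks of `K` are `K₁₁ = G*G(1+G*G)⁻¹`,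
`K₂₂ = GG*(1+GG*)⁻¹`, `K₂₁ = G(1+G*G)⁻¹`, `K₁₂ = −G*(1+GG*)⁻¹`; in particular `K` is
`J`-self-adjoint. -/
theorem stmt_16 {H₁ H₂ : Type}
    [NormedAddCommGroup H₁] [InnerProductSpace ℂ H₁] [CompleteSpace H₁]
    [NormedAddCommGroup H₂] [InnerProductSpace ℂ H₂] [CompleteSpace H₂]
    (G : H₁ →L[ℂ] H₂)
    (L : WithLp 2 (H₁ × H₂) →L[ℂ] WithLp 2 (H₁ × H₂))
    (hL : ∀ f : WithLp 2 (H₁ × H₂),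
      WithLp.equiv 2 (H₁ × H₂) (L f) =
        (-(ContinuousLinearMap.adjoint G) (WithLp.equiv 2 (H₁ × H₂) f).2,
          G (WithLp.equiv 2 (H₁ × H₂) f).1))
    (P₁ P₂ : WithLp 2 (H₁ × H₂) →L[ℂ] WithLp 2 (H₁ × H₂))
    (hP₁ : ∀ f : WithLp 2 (H₁ × H₂),
      WithLp.equiv 2 (H₁ × H₂) (P₁ f) = ((WithLp.equiv 2 (H₁ × H₂) f).1, 0))
    (hP₂ : ∀ f : WithLp 2 (H₁ × H₂),
      WithLp.equiv 2 (H₁ × H₂) (P₂ f) = (0, (WithLp.equiv 2 (H₁ × H₂) f).2))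
    (K : WithLp 2 (H₁ × H₂) →L[ℂ] WithLp 2 (H₁ × H₂))
    (hK : K = L * Ring.inverse (1 + L)) :
    (∀ f : WithLp 2 (H₁ × H₂),
      WithLp.equiv 2 (H₁ × H₂) (K f) =
        (((ContinuousLinearMap.adjoint G).comp G *
              Ring.inverse (1 + (ContinuousLinearMap.adjoint G).comp G))
            (WithLp.equiv 2 (H₁ × H₂) f).1 -
          ((ContinuousLinearMap.adjoint G).comp
              (Ring.inverse (1 + G.comp (ContinuousLinearMap.adjoint G))))
            (WithLp.equiv 2 (H₁ × H₂) f).2,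
         (G.comp (Ring.inverse (1 + (ContinuousLinearMap.adjoint G).comp G)))
            (WithLp.equiv 2 (H₁ × H₂) f).1 +
          (G.comp (ContinuousLinearMap.adjoint G) *
              Ring.inverse (1 + G.comp (ContinuousLinearMap.adjoint G)))
            (WithLp.equiv 2 (H₁ × H₂) f).2)) ∧
      ContinuousLinearMap.adjoint K * (P₁ - P₂) = (P₁ - P₂) * K := by
  have hskew := adjoint_eq_neg_of_skew_blocks hL
  refine ⟨fun f => ?_, ?_⟩
  · rw [hK, mul_apply_eq_comp, hL, inverse_one_add_apply_of_skew_blocks hL]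
    ext
    · simp only [map_sub, mul_apply_eq_comp, comp_apply]
      abel
    · simp only [map_add, mul_apply_eq_comp, comp_apply]
  · rw [← star_eq_adjoint, hK]
    exact star_mul_inverse_one_add_mul_of_anticommute (by rw [star_eq_adjoint, hskew])
      (anticommute_of_skew_blocks hL hP₁ hP₂) (isUnit_one_add_of_adjoint_eq_neg L hskew)
end

section
/- Let H = H₁ ⊕ H₂ and let K be a bounded J-self-adjoint operator with ‖K‖ < 1, written in block form. Then the (1,1)-block of L := K(1−K)⁻¹ equals Q(1−Q)⁻¹, where Q := K₁₁ − K₂₁*(1−K₂₂)⁻¹K₂₁; here 1−Q is strictly positive hence invertible provided K₁₁ ≤ c < 1 and K₂₂ < 1. -/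
open scoped InnerProductSpace ComplexConjugate

/-- Let `H = H₁ ⊕ H₂` and let `K` be a bounded `J`-self-adjoint operator
with `‖K‖ < 1`.  Then the `(1,1)`-block of `L := K(1−K)⁻¹` equals `Q(1−Q)⁻¹`, where
`Q := K₁₁ − K₂₁*(1−K₂₂)⁻¹K₂₁` (all blocks realized as `PᵢKPⱼ` on `H`; `1−Q` is invertible
since `‖K‖ < 1`). -/
theorem stmt_17 {H : Type}
    [NormedAddCommGroup H] [InnerProductSpace ℂ H] [CompleteSpace H]
    (P₁ P₂ : H →L[ℂ] H)
    (hP₁ : IsIdempotentElem P₁) (hP₁sa : IsSelfAdjoint P₁)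
    (hP₂ : IsIdempotentElem P₂) (hP₂sa : IsSelfAdjoint P₂)
    (hsum : P₁ + P₂ = 1)
    (K : H →L[ℂ] H)
    (hJ : ContinuousLinearMap.adjoint K * (P₁ - P₂) = (P₁ - P₂) * K)
    (hnorm : ‖K‖ < 1)
    (L Q : H →L[ℂ] H)
    (hL : L = K * Ring.inverse (1 - K))
    (hQ : Q = P₁ * K * P₁ -
      ContinuousLinearMap.adjoint (P₂ * K * P₁) *
        Ring.inverse (1 - P₂ * K * P₂) * (P₂ * K * P₁)) :
    P₁ * L * P₁ = Q * Ring.inverse (1 - Q) := by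
  classical
  -- basic projection algebra
  have h11 : P₁ * P₁ = P₁ := hP₁.eq
  have h22 : P₂ * P₂ = P₂ := hP₂.eq
  have h2eq : P₂ = 1 - P₁ := eq_sub_of_add_eq' hsum
  have h12 : P₁ * P₂ = 0 := by rw [h2eq, mul_sub, mul_one, h11, sub_self]
  have h21 : P₂ * P₁ = 0 := by rw [h2eq, sub_mul, one_mul, h11, sub_self]
  have l11 : ∀ x : H →L[ℂ] H, P₁ * (P₁ * x) = P₁ * x := fun x => by
    rw [← mul_assoc, h11]
  have l22 : ∀ x : H →L[ℂ] H, P₂ * (P₂ * x) = P₂ * x := fun x => by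
    rw [← mul_assoc, h22]
  have l12 : ∀ x : H →L[ℂ] H, P₁ * (P₂ * x) = 0 := fun x => by
    rw [← mul_assoc, h12, zero_mul]
  have l21 : ∀ x : H →L[ℂ] H, P₂ * (P₁ * x) = 0 := fun x => by
    rw [← mul_assoc, h21, zero_mul]
  have hproj : ∀ x : H →L[ℂ] H, P₁ * x + P₂ * x = x := fun x => by
    rw [← add_mul, hsum, one_mul]
  have hproj' : ∀ x : H →L[ℂ] H, x * P₁ + x * P₂ = x := fun x => by
    rw [← mul_add, hsum, mul_one]
  -- star facts
  have hs1 : star P₁ = P₁ := hP₁sa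
  have hs2 : star P₂ = P₂ := hP₂sa
  have hJ' : star K * (P₁ - P₂) = (P₁ - P₂) * K := by
    rw [ContinuousLinearMap.star_eq_adjoint]; exact hJ
  have hJJ : (P₁ - P₂) * (P₁ - P₂) = 1 := by
    rw [sub_mul, mul_sub, mul_sub, h11, h12, h21, h22, sub_zero, zero_sub, sub_neg_eq_add,
      hsum]
  have hKstar : star K = (P₁ - P₂) * K * (P₁ - P₂) := by
    have h := congrArg (fun x => x * (P₁ - P₂)) hJ'
    simpa only [mul_assoc, hJJ, mul_one] using h
  -- blocks
  set A : H →L[ℂ] H := P₁ * K * P₁ with hA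
  set B : H →L[ℂ] H := P₁ * K * P₂ with hB
  set C : H →L[ℂ] H := P₂ * K * P₁ with hC
  set D : H →L[ℂ] H := P₂ * K * P₂ with hD
  have hCstar : ContinuousLinearMap.adjoint C = -B := by
    rw [← ContinuousLinearMap.star_eq_adjoint, hC, hB, star_mul, star_mul, hs1, hs2,
      hKstar]
    have e1 : P₁ * (P₁ - P₂) = P₁ := by rw [mul_sub, h11, h12, sub_zero]
    have e2 : (P₁ - P₂) * P₂ = -P₂ := by rw [sub_mul, h12, h22, zero_sub]
    calc P₁ * ((P₁ - P₂) * K * (P₁ - P₂) * P₂)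
        = (P₁ * (P₁ - P₂)) * K * ((P₁ - P₂) * P₂) := by
          simp only [mul_assoc]
      _ = -(P₁ * K * P₂) := by rw [e1, e2, mul_neg, mul_assoc]
  -- invertibility
  have hKu : IsUnit (1 - K) := isUnit_one_sub_of_norm_lt_one hnorm
  have hP2norm : ‖P₂‖ ≤ 1 := by
    have h := CStarRing.norm_star_mul_self (x := P₂)
    rw [hs2, h22] at h
    nlinarith [norm_nonneg P₂]
  have hDnorm : ‖D‖ < 1 := by
    rw [hD]
    have b1 : ‖P₂ * K * P₂‖ ≤ ‖P₂ * K‖ * ‖P₂‖ := norm_mul_le _ _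
    have b2 : ‖P₂ * K‖ ≤ ‖P₂‖ * ‖K‖ := norm_mul_le _ _
    nlinarith [norm_nonneg K, norm_nonneg P₂, norm_nonneg (P₂ * K)]
  have hDu : IsUnit (1 - D) := isUnit_one_sub_of_norm_lt_one hDnorm
  set N : H →L[ℂ] H := Ring.inverse (1 - K) with hNdef
  set E : H →L[ℂ] H := Ring.inverse (1 - D) with hEdef
  have hN1 : (1 - K) * N = 1 := Ring.mul_inverse_cancel _ hKu
  have hN2 : N * (1 - K) = 1 := Ring.inverse_mul_cancel _ hKu
  have hE1 : (1 - D) * E = 1 := Ring.mul_inverse_cancel _ hDu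
  have hE2 : E * (1 - D) = 1 := Ring.inverse_mul_cancel _ hDu
  have hQ' : Q = A + B * E * C := by
    rw [hQ, hCstar, neg_mul, neg_mul, sub_neg_eq_add]
  -- entries of N
  set u₁ : H →L[ℂ] H := P₁ * N * P₁ with hu₁
  set u₂ : H →L[ℂ] H := P₂ * N * P₁ with hu₂
  set v₂ : H →L[ℂ] H := P₁ * N * P₂ with hv₂
  -- column relation: u₂ = C * u₁ + D * u₂
  have hcol0 : u₂ - (C * u₁ + D * u₂) = 0 := by
    have key : P₂ * ((1 - K) * (N * P₁)) = 0 := by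
      rw [← mul_assoc (1 - K) N P₁, hN1, one_mul, h21]
    calc u₂ - (C * u₁ + D * u₂)
        = P₂ * ((1 - K) * (N * P₁)) := by
          rw [hu₂, hC, hD, hu₁, sub_mul, one_mul, mul_sub]
          conv_rhs => rw [← hproj (N * P₁)]
          simp only [mul_add, add_mul, mul_assoc, l11, l22, l12, l21, h11, h22, h12, h21,
            zero_mul, mul_zero, zero_add, add_zero]
      _ = 0 := key
  have hu2E : u₂ = E * (C * u₁) := by
    have h1 : (1 - D) * u₂ = C * u₁ := by
      have h2 : (1 - D) * u₂ - C * u₁ = 0 := by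
        rw [sub_mul, one_mul, ← hcol0]; abel
      exact sub_eq_zero.mp h2
    calc u₂ = (E * (1 - D)) * u₂ := by rw [hE2, one_mul]
      _ = E * (C * u₁) := by rw [mul_assoc, h1]
  -- column relation with P₁
  have hcol1 : u₁ - (A * u₁ + B * u₂) = P₁ := by
    have key : P₁ * ((1 - K) * (N * P₁)) = P₁ := by
      rw [← mul_assoc (1 - K) N P₁, hN1, one_mul, h11]
    calc u₁ - (A * u₁ + B * u₂)
        = P₁ * ((1 - K) * (N * P₁)) := by
          rw [hu₁, hA, hB, hu₂, sub_mul, one_mul, mul_sub]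
          conv_rhs => rw [← hproj (N * P₁)]
          simp only [mul_add, add_mul, mul_assoc, l11, l22, l12, l21, h11, h22, h12, h21,
            zero_mul, mul_zero, zero_add, add_zero]
      _ = P₁ := key
  -- row relations
  have hrow0 : v₂ - (u₁ * B + v₂ * D) = 0 := by
    have key : ((P₁ * N) * (1 - K)) * P₂ = 0 := by
      rw [mul_assoc P₁ N (1 - K), hN2, mul_one, h12]
    calc v₂ - (u₁ * B + v₂ * D)
        = ((P₁ * N) * (1 - K)) * P₂ := by
          rw [hv₂, hu₁, hB, hD, mul_sub, mul_one, sub_mul]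
          conv_rhs => rw [← hproj' (P₁ * N)]
          simp only [mul_add, add_mul, mul_assoc, l11, l22, l12, l21, h11, h22, h12, h21,
            zero_mul, mul_zero, zero_add, add_zero]
      _ = 0 := key
  have hv2E : v₂ = u₁ * B * E := by
    have h1 : v₂ * (1 - D) = u₁ * B := by
      have h2 : v₂ * (1 - D) - u₁ * B = 0 := by
        rw [mul_sub, mul_one, ← hrow0]; abel
      exact sub_eq_zero.mp h2
    calc v₂ = v₂ * ((1 - D) * E) := by rw [hE1, mul_one]
      _ = u₁ * B * E := by rw [← mul_assoc, h1]
  have hrow1 : u₁ - (u₁ * A + v₂ * C) = P₁ := by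
    have key : ((P₁ * N) * (1 - K)) * P₁ = P₁ := by
      rw [mul_assoc P₁ N (1 - K), hN2, mul_one, h11]
    calc u₁ - (u₁ * A + v₂ * C)
        = ((P₁ * N) * (1 - K)) * P₁ := by
          rw [hu₁, hv₂, hA, hC, mul_sub, mul_one, sub_mul]
          conv_rhs => rw [← hproj' (P₁ * N)]
          simp only [mul_add, add_mul, mul_assoc, l11, l22, l12, l21, h11, h22, h12, h21,
            zero_mul, mul_zero, zero_add, add_zero]
      _ = P₁ := key
  -- Schur complement relations for 1 - Q
  have hQu₁ : (1 - Q) * u₁ = P₁ := by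
    have h3 : Q * u₁ = A * u₁ + B * u₂ := by
      rw [hQ', add_mul, mul_assoc (B * E) C u₁, mul_assoc B E (C * u₁), ← hu2E]
    rw [sub_mul, one_mul, h3]
    exact hcol1
  have hu₁Q : u₁ * (1 - Q) = P₁ := by
    have h3 : u₁ * Q = u₁ * A + v₂ * C := by
      rw [hQ', mul_add, ← mul_assoc u₁ (B * E) C, ← mul_assoc u₁ B E, ← hv2E]
    rw [mul_sub, mul_one, h3]
    exact hrow1
  have hQP₂ : Q * P₂ = 0 := by
    rw [hQ', hA, hB, hC]
    simp only [mul_add, add_mul, mul_assoc, l11, l22, l12, l21, h11, h22, h12, h21,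
      zero_mul, mul_zero, zero_add, add_zero]
  have hP₂Q : P₂ * Q = 0 := by
    rw [hQ', hA, hB, hC]
    simp only [mul_add, add_mul, mul_assoc, l11, l22, l12, l21, h11, h22, h12, h21,
      zero_mul, mul_zero, zero_add, add_zero]
  -- the inverse of 1 - Q is P₂ + u₁
  set V : H →L[ℂ] H := P₂ + u₁ with hV
  have hVQ : (1 - Q) * V = 1 := by
    rw [hV, mul_add, hQu₁, sub_mul, one_mul, hQP₂, sub_zero, ← hsum]
    abel
  have hQV : V * (1 - Q) = 1 := by
    rw [hV, add_mul, hu₁Q, mul_sub, mul_one, hP₂Q, sub_zero, ← hsum]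
    abel
  have hQunit : IsUnit (1 - Q) := ⟨⟨1 - Q, V, hVQ, hQV⟩, rfl⟩
  have hRinv : Ring.inverse (1 - Q) = V := by
    calc Ring.inverse (1 - Q) = Ring.inverse (1 - Q) * ((1 - Q) * V) := by
          rw [hVQ, mul_one]
      _ = (Ring.inverse (1 - Q) * (1 - Q)) * V := by rw [mul_assoc]
      _ = V := by rw [Ring.inverse_mul_cancel _ hQunit, one_mul]
  -- the (1,1) block of L
  have hLQ : P₁ * L * P₁ = Q * u₁ := by
    have main : P₁ * (K * N) * P₁ = A * u₁ + B * u₂ := by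
      rw [hA, hB, hu₁, hu₂]
      conv_lhs => rw [mul_assoc, mul_assoc, ← hproj (N * P₁)]
      simp only [mul_add, add_mul, mul_assoc, l11, l22, l12, l21, h11, h22, h12, h21,
        zero_mul, mul_zero, zero_add, add_zero]
    have h3 : Q * u₁ = A * u₁ + B * u₂ := by
      rw [hQ', add_mul, mul_assoc (B * E) C u₁, mul_assoc B E (C * u₁), ← hu2E]
    rw [hL, main, h3]
  rw [hLQ, hRinv, hV, mul_add, hQP₂, zero_add]
end
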